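/- Let α be a partial action of a group G on a ring A such that each ideal D_g has local units. Then the partial skew group ring A ⋆_α G is graded simple (with respect to the natural G-grading (A ⋆_α G)_g = D_g δ_g) if and only if A is G-simple. -/
import Mathlib


/-- A partial action of a group `G` on a (possibly non-unital) ring `A`: a family
of two-sided ideals `D g` and ring isomorphisms `α_g : D g⁻¹ → D g` (encoded as
total maps `act g : A → A` whose behaviour only matters on `D g⁻¹`) satisfying
the partial action axioms. -/
structure RingPartialAction (G A : Type*) [Group G] [NonUnitalRing A] where
  D : G → TwoSidedIdeal A
  act : G → A → A
  D_one : D 1 = ⊤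
  act_one : ∀ x : A, act 1 x = x
  act_mem : ∀ g : G, ∀ x ∈ D g⁻¹, act g x ∈ D g
  act_add : ∀ g : G, ∀ x ∈ D g⁻¹, ∀ y ∈ D g⁻¹, act g (x + y) = act g x + act g y
  act_mul : ∀ g : G, ∀ x ∈ D g⁻¹, ∀ y ∈ D g⁻¹, act g (x * y) = act g x * act g y
  act_inv : ∀ g : G, ∀ x ∈ D g⁻¹, act g⁻¹ (act g x) = x
  act_image : ∀ g h : G,
    act g '' ((D g⁻¹ : Set A) ∩ (D h : Set A)) = (D g : Set A) ∩ (D (g * h) : Set A)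
  act_comp : ∀ g h : G, ∀ x : A,
    x ∈ D h⁻¹ → x ∈ D (g * h)⁻¹ → act g (act h x) = act (g * h) x

namespace RingPartialAction

variable {G A : Type*} [Group G] [NonUnitalRing A] (P : RingPartialAction G A)

/-- An ideal `I` of `A` is `G`-invariant if `α_g (I ∩ D g⁻¹) ⊆ I` for all `g`. -/
def GInvariant (I : TwoSidedIdeal A) : Prop :=
  ∀ g : G, ∀ x ∈ I, x ∈ P.D g⁻¹ → P.act g x ∈ I

/-- `A` is `G`-simple if its only `G`-invariant ideals are `{0}` and `A`. -/
def GSimple : Prop :=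
  ∀ I : TwoSidedIdeal A, P.GInvariant I → I = ⊥ ∨ I = ⊤

/-- The multiplication of the partial skew group ring `A ⋆_α G`, realized on
finitely supported functions `G →₀ A`:
`(a_g δ_g)(b_h δ_h) = α_g (α_{g⁻¹}(a_g) * b_h) δ_{g h}`. -/
noncomputable def skewMul (f h : G →₀ A) : G →₀ A :=
  f.sum fun g a => h.sum fun g' b =>
    Finsupp.single (g * g') (P.act g (P.act g⁻¹ a * b))

/-- The underlying set of the partial skew group ring `A ⋆_α G`: finitely
supported functions `f : G →₀ A` with `f g ∈ D g` for all `g`. -/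
def SkewSet : Set (G →₀ A) := {f | ∀ g : G, f g ∈ P.D g}

/-- A (two-sided) ideal of the partial skew group ring. -/
def IsSkewIdeal (T : Set (G →₀ A)) : Prop :=
  T ⊆ P.SkewSet ∧ (0 : G →₀ A) ∈ T ∧
    (∀ f ∈ T, ∀ h ∈ T, f + h ∈ T) ∧ (∀ f ∈ T, -f ∈ T) ∧
    (∀ f ∈ T, ∀ h ∈ P.SkewSet, P.skewMul f h ∈ T ∧ P.skewMul h f ∈ T)

/-- Simplicity of the partial skew group ring `A ⋆_α G`. -/
def SkewSimple : Prop :=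
  ∀ T : Set (G →₀ A), P.IsSkewIdeal T → T = {0} ∨ T = P.SkewSet

/-- Graded simplicity of `A ⋆_α G` with respect to its natural `G`-grading
`(A ⋆_α G)_g = D_g δ_g`. -/
def SkewGradedSimple : Prop :=
  ∀ T : Set (G →₀ A), P.IsSkewIdeal T →
    (∀ f ∈ T, ∀ g : G, Finsupp.single g (f g) ∈ T) →
    T = {0} ∨ T = P.SkewSet

/-- The partial action is injective: no non-identity `g` is such that
`D g ∩ D g⁻¹` is non-zero and `α_g` restricts to the identity on it. -/
def Injective : Prop :=
  ∀ g : G, g ≠ 1 →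
    (∀ x : A, x ∈ P.D g → x ∈ P.D g⁻¹ → P.act g x = x) →
    ∀ x : A, x ∈ P.D g → x ∈ P.D g⁻¹ → x = 0

/-- `α_g` is inner at an idempotent `u` (viewing `A` as a multiplicative
semigroup): `u ∈ D g⁻¹` and there are `a ∈ u A α_g(u)`, `b ∈ α_g(u) A u` with
`ab = u`, `ba = α_g u` and `α_g x = b * x * a` for all `x ∈ uAu`. -/
def InnerAt (g : G) (u : A) : Prop :=
  u ∈ P.D g⁻¹ ∧ ∃ a b : A,
    (∃ c : A, a = u * c * P.act g u) ∧ (∃ c : A, b = P.act g u * c * u) ∧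
    a * b = u ∧ b * a = P.act g u ∧
    ∀ c : A, P.act g (u * c * u) = b * (u * c * u) * a

/-- The partial action is outer: there is a non-zero idempotent `u ∈ A` such
that `α_g` is outer at `u` for every non-identity `g ∈ G`. -/
def Outer : Prop :=
  ∃ u : A, u ≠ 0 ∧ u * u = u ∧ ∀ g : G, g ≠ 1 → ¬ P.InnerAt g u

end RingPartialAction

/-- A subset `D` of a ring has local units: every finite subset of `D` lies in
`eDe` for an idempotent `e ∈ D`. -/
def HasLocalUnitsOn {A : Type*} [NonUnitalRing A] (D : Set A) : Prop :=
  ∀ s : Finset A, ↑s ⊆ D → ∃ e ∈ D, e * e = e ∧ ∀ x ∈ s, e * x = x ∧ x * e = x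



namespace RingPartialAction
variable {G A : Type*} [Group G] [NonUnitalRing A] (P : RingPartialAction G A)

lemma act_zero' (g : G) : P.act g 0 = 0 := by
  have h := P.act_add g 0 (P.D g⁻¹).zero_mem 0 (P.D g⁻¹).zero_mem
  rw [add_zero] at h
  exact (left_eq_add.mp h)

lemma act_act_inv' (g : G) (x : A) (hx : x ∈ P.D g) : P.act g (P.act g⁻¹ x) = x := by
  have := P.act_inv g⁻¹ x (by simpa using hx)
  simpa using this

lemma skewMul_single' (g g' : G) (a b : A) :
    P.skewMul (Finsupp.single g a) (Finsupp.single g' b)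
      = Finsupp.single (g * g') (P.act g (P.act g⁻¹ a * b)) := by
  unfold skewMul
  rw [Finsupp.sum_single_index, Finsupp.sum_single_index]
  · simp [P.act_zero']
  · rw [Finsupp.sum_single_index] <;> simp [P.act_zero']

lemma single_mem_skewSet' {g : G} {a : A} (ha : a ∈ P.D g) :
    Finsupp.single g a ∈ P.SkewSet := by
  classical
  intro k
  rw [Finsupp.single_apply]
  split
  · next h => exact h ▸ ha
  · exact (P.D k).zero_mem

lemma skewMul_apply_mem' (f h : G →₀ A) (k : G) (S : Set A) (h0 : (0 : A) ∈ S)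
    (hadd : ∀ x ∈ S, ∀ y ∈ S, x + y ∈ S)
    (hv : ∀ g g' : G, g * g' = k → P.act g (P.act g⁻¹ (f g) * h g') ∈ S) :
    (P.skewMul f h) k ∈ S := by
  classical
  unfold skewMul
  rw [Finsupp.sum_apply, Finsupp.sum]
  refine Finset.sum_induction _ (· ∈ S) (fun a b ha hb => hadd a ha b hb) h0 ?_
  intro g _
  rw [Finsupp.sum_apply, Finsupp.sum]
  refine Finset.sum_induction _ (· ∈ S) (fun a b ha hb => hadd a ha b hb) h0 ?_
  intro g' _
  rw [Finsupp.single_apply]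
  split
  · next he => exact hv g g' he
  · exact h0

end RingPartialAction

/-- if each ideal `D g` has local units, then the partial skew
group ring `A ⋆_α G` is graded simple if and only if `A` is `G`-simple. -/
theorem stmt9 {G A : Type*} [Group G] [NonUnitalRing A]
    (P : RingPartialAction G A)
    (hlu : ∀ g : G, HasLocalUnitsOn (P.D g : Set A)) :
    P.SkewGradedSimple ↔ P.GSimple := by
  classical
  constructor
  · -- graded simple → G-simple
    intro hGS I hInv
    by_cases hI : I = ⊥
    · exact Or.inl hI
    right
    set T : Set (G →₀ A) := {f | ∀ g : G, f g ∈ P.D g ∧ f g ∈ I} with hTdef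
    have hTsub : T ⊆ P.SkewSet := fun f hf g => (hf g).1
    -- the key multiplicative closure computation
    have key : ∀ g g' : G, ∀ a b : A, a ∈ P.D g → b ∈ P.D g' →
        (a ∈ I ∨ b ∈ I) →
        P.act g (P.act g⁻¹ a * b) ∈ P.D (g * g') ∧ P.act g (P.act g⁻¹ a * b) ∈ I := by
      intro g g' a b haD hbD hab
      have haD' : a ∈ P.D g⁻¹⁻¹ := by simpa using haD
      have h1 : P.act g⁻¹ a ∈ P.D g⁻¹ := by simpa using P.act_mem g⁻¹ a haD'
      have hc1 : P.act g⁻¹ a * b ∈ P.D g⁻¹ := (P.D g⁻¹).mul_mem_right _ _ h1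
      have hc2 : P.act g⁻¹ a * b ∈ P.D g' := (P.D g').mul_mem_left _ _ hbD
      have hcI : P.act g⁻¹ a * b ∈ I := by
        rcases hab with hA | hB
        · exact I.mul_mem_right _ _ (hInv g⁻¹ a hA haD')
        · exact I.mul_mem_left _ _ hB
      have himg : P.act g (P.act g⁻¹ a * b) ∈ (P.D g : Set A) ∩ (P.D (g * g') : Set A) := by
        rw [← P.act_image g g']
        exact ⟨P.act g⁻¹ a * b, ⟨hc1, hc2⟩, rfl⟩
      exact ⟨himg.2, hInv g _ hcI hc1⟩
    have hTideal : P.IsSkewIdeal T := by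
      refine ⟨hTsub, fun g => by simp [(P.D g).zero_mem, I.zero_mem], ?_, ?_, ?_⟩
      · intro f hf h hh g
        have := (hf g); have := (hh g)
        exact ⟨by simpa using (P.D g).add_mem (hf g).1 (hh g).1,
               by simpa using I.add_mem (hf g).2 (hh g).2⟩
      · intro f hf g
        exact ⟨by simpa using (P.D g).neg_mem (hf g).1,
               by simpa using I.neg_mem (hf g).2⟩
      · intro f hf h hh
        constructor
        · intro k
          constructor
          · exact P.skewMul_apply_mem' f h k (P.D k) (P.D k).zero_mem
              (fun x hx y hy => (P.D k).add_mem hx hy)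
              (fun g g' he => he ▸ (key g g' (f g) (h g') (hf g).1 (hh g') (Or.inl (hf g).2)).1)
          · exact P.skewMul_apply_mem' f h k I I.zero_mem
              (fun x hx y hy => I.add_mem hx hy)
              (fun g g' he => (key g g' (f g) (h g') (hf g).1 (hh g') (Or.inl (hf g).2)).2)
        · intro k
          constructor
          · exact P.skewMul_apply_mem' h f k (P.D k) (P.D k).zero_mem
              (fun x hx y hy => (P.D k).add_mem hx hy)
              (fun g g' he => he ▸ (key g g' (h g) (f g') (hh g) (hf g').1 (Or.inr (hf g').2)).1)
          · exact P.skewMul_apply_mem' h f k I I.zero_mem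
              (fun x hx y hy => I.add_mem hx hy)
              (fun g g' he => (key g g' (h g) (f g') (hh g) (hf g').1 (Or.inr (hf g').2)).2)
    have hTgr : ∀ f ∈ T, ∀ g : G, Finsupp.single g (f g) ∈ T := by
      intro f hf g k
      rw [Finsupp.single_apply]
      split
      · next he => exact he ▸ hf g
      · exact ⟨(P.D k).zero_mem, I.zero_mem⟩
    rcases hGS T hTideal hTgr with hT0 | hTS
    · -- contradiction with I ≠ ⊥
      exfalso
      apply hI
      rw [eq_bot_iff]
      intro x hx
      have hxT : Finsupp.single (1 : G) x ∈ T := by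
        intro k
        rw [Finsupp.single_apply]
        split
        · next he =>
          exact ⟨by rw [← he, P.D_one]; trivial, hx⟩
        · exact ⟨(P.D k).zero_mem, I.zero_mem⟩
      rw [hT0] at hxT
      have : x = 0 := by
        have := Finsupp.single_eq_zero.mp (Set.mem_singleton_iff.mp hxT)
        exact this
      simpa [TwoSidedIdeal.mem_bot] using this
    · -- I = ⊤
      rw [eq_top_iff]
      intro x _
      have hxS : Finsupp.single (1 : G) x ∈ P.SkewSet :=
        P.single_mem_skewSet' (by rw [P.D_one]; trivial)
      rw [← hTS] at hxS
      have := (hxS 1).2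
      simpa using this
  · -- G-simple → graded simple
    intro hGSimple T hT hgr
    obtain ⟨hTsub, hT0, hTadd, hTneg, hTmul⟩ := hT
    by_cases hTtriv : T = {0}
    · exact Or.inl hTtriv
    right
    -- find a nonzero element of T
    obtain ⟨f0, hf0T, hf0ne⟩ : ∃ f0 ∈ T, f0 ≠ 0 := by
      by_contra hcon
      push_neg at hcon
      exact hTtriv (Set.eq_singleton_iff_unique_mem.mpr ⟨hT0, fun f hf => hcon f hf⟩)
    obtain ⟨g0, hg0⟩ : ∃ g0 : G, f0 g0 ≠ 0 := by
      by_contra hcon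
      push_neg at hcon
      exact hf0ne (Finsupp.ext hcon)
    set a := f0 g0 with ha
    have haD : a ∈ P.D g0 := hTsub hf0T g0
    have haT : Finsupp.single g0 a ∈ T := hgr f0 hf0T g0
    -- the degree-one ideal
    set I : TwoSidedIdeal A := TwoSidedIdeal.mk'
      {x : A | Finsupp.single (1 : G) x ∈ T}
      (by simp only [Set.mem_setOf_eq, Finsupp.single_zero]; exact hT0)
      (by intro x y hx hy
          simp only [Set.mem_setOf_eq] at *
          rw [Finsupp.single_add]
          exact hTadd _ hx _ hy)
      (by intro x hx
          simp only [Set.mem_setOf_eq] at *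
          rw [Finsupp.single_neg]
          exact hTneg _ hx)
      (by intro x y hy
          simp only [Set.mem_setOf_eq] at *
          have := (hTmul _ hy (Finsupp.single (1:G) x)
            (P.single_mem_skewSet' (by rw [P.D_one]; trivial))).2
          rwa [P.skewMul_single', one_mul, inv_one, P.act_one, P.act_one] at this)
      (by intro x y hx
          simp only [Set.mem_setOf_eq] at *
          have := (hTmul _ hx (Finsupp.single (1:G) y)
            (P.single_mem_skewSet' (by rw [P.D_one]; trivial))).1
          rwa [P.skewMul_single', one_mul, inv_one, P.act_one, P.act_one] at this) with hIdef
    have hmemI : ∀ x : A, x ∈ I ↔ Finsupp.single (1 : G) x ∈ T := by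
      intro x; rw [hIdef, TwoSidedIdeal.mem_mk']; rfl
    -- I is G-invariant
    have hinv : P.GInvariant I := by
      intro g x hxI hxD
      rw [hmemI] at hxI ⊢
      obtain ⟨e, heD, hee, hunit⟩ := hlu g⁻¹ {x} (by simpa using hxD)
      obtain ⟨hex, hxe⟩ := hunit x (Finset.mem_singleton_self x)
      have heD' : e ∈ P.D g⁻¹ := heD
      have huD : P.act g e ∈ P.D g := P.act_mem g e heD'
      have s1 : P.skewMul (Finsupp.single g (P.act g e)) (Finsupp.single (1:G) x)
          = Finsupp.single g (P.act g x) := by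
        rw [P.skewMul_single', mul_one, P.act_inv g e heD', hex]
      have hs1T : Finsupp.single g (P.act g x) ∈ T := by
        rw [← s1]
        exact (hTmul _ hxI _ (P.single_mem_skewSet' huD)).2
      have s2 : P.skewMul (Finsupp.single g (P.act g x)) (Finsupp.single g⁻¹ e)
          = Finsupp.single (1:G) (P.act g x) := by
        rw [P.skewMul_single', P.act_inv g x hxD, hxe, mul_inv_cancel]
      rw [← s2]
      exact (hTmul _ hs1T _ (P.single_mem_skewSet' heD')).1
    -- I is nonzero: a ∈ I
    have haI : a ∈ I := by
      rw [hmemI]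
      have haD' : a ∈ P.D g0⁻¹⁻¹ := by simpa using haD
      have h1 : P.act g0⁻¹ a ∈ P.D g0⁻¹ := by simpa using P.act_mem g0⁻¹ a haD'
      obtain ⟨e, heD, hee, hunit⟩ := hlu g0⁻¹ {P.act g0⁻¹ a} (by simpa using h1)
      obtain ⟨_, hxe⟩ := hunit _ (Finset.mem_singleton_self _)
      have s : P.skewMul (Finsupp.single g0 a) (Finsupp.single g0⁻¹ e)
          = Finsupp.single (1:G) a := by
        rw [P.skewMul_single', hxe, P.act_act_inv' g0 a haD, mul_inv_cancel]
      rw [← s]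
      exact (hTmul _ haT _ (P.single_mem_skewSet' heD)).1
    have hIne : I ≠ ⊥ := by
      intro hbot
      rw [hbot, TwoSidedIdeal.mem_bot] at haI
      exact hg0 haI
    have hItop : I = ⊤ := (hGSimple I hinv).resolve_left hIne
    have hall : ∀ x : A, Finsupp.single (1 : G) x ∈ T := by
      intro x
      rw [← hmemI, hItop]
      trivial
    -- conclude T = SkewSet
    apply Set.Subset.antisymm hTsub
    intro f hf
    have hsum : ∑ g ∈ f.support, Finsupp.single g (f g) = f := by
      have := Finsupp.sum_single f
      rwa [Finsupp.sum] at this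
    rw [← hsum]
    refine Finset.sum_induction _ (· ∈ T) (fun a b ha hb => hTadd a ha b hb) hT0 ?_
    intro g _
    have hbD : f g ∈ P.D g := hf g
    obtain ⟨e, heD, hee, hunit⟩ := hlu g {f g} (by simpa using hbD)
    obtain ⟨_, hxe⟩ := hunit _ (Finset.mem_singleton_self _)
    have s : P.skewMul (Finsupp.single (1:G) (f g)) (Finsupp.single g e)
        = Finsupp.single g (f g) := by
      rw [P.skewMul_single', one_mul, inv_one, P.act_one, P.act_one, hxe]
    rw [← s]
    exact (hTmul _ (hall (f g)) _ (P.single_mem_skewSet' heD)).1
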